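/- (Uniqueness of the planar log-Minkowski problem for smooth symmetric bodies) Let K and L be origin-symmetric convex bodies in ℝ² with C² boundaries of positive curvature. If the cone-volume measures of K and L coincide, V_K = V_L, then K = L. -/

import Mathlib

open Real MeasureTheory intervalIntegral

/-- The radius of curvature `1/κ = h + h''` of the convex body with support
function `h` (as a `2π`-periodic function of the normal angle). -/
noncomputable def bodyRho (h : ℝ → ℝ) (θ : ℝ) : ℝ := h θ + deriv (deriv h) θ

/-- The curvature `κ(u)` of the boundary at the point with outer normal angle `θ`,
so that `1/κ = h + h''`. -/
noncomputable def bodyCurv (h : ℝ → ℝ) (θ : ℝ) : ℝ := (bodyRho h θ)⁻¹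

/-- `h` is the support function of a planar convex body with `C²` boundary of
positive curvature: `h` is `C²`, `2π`-periodic and `h + h'' > 0`. -/
def IsSmoothBody (h : ℝ → ℝ) : Prop :=
  ContDiff ℝ 2 h ∧ Function.Periodic h (2 * π) ∧ ∀ θ : ℝ, 0 < bodyRho h θ

/-- The body is origin-symmetric iff its support function is `π`-antipodally invariant. -/
def OriginSymmetric (h : ℝ → ℝ) : Prop := ∀ θ : ℝ, h (θ + π) = h θ

/-- The area `V(K) = (1/2)∫_{S¹} h_K (h_K + h_K'') dθ`. -/
noncomputable def bodyArea (h : ℝ → ℝ) : ℝ :=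
  (1 / 2) * ∫ θ in (0:ℝ)..(2 * π), h θ * bodyRho h θ

/-- The perimeter `S(K) = ∫_{S¹} h_K dθ`. -/
noncomputable def bodyPerim (h : ℝ → ℝ) : ℝ := ∫ θ in (0:ℝ)..(2 * π), h θ

/-- The mixed volume `V(K, L) = (1/2)∫_{S¹} h_L (h_K + h_K'') dθ`. -/
noncomputable def bodyMixedVol (hK hL : ℝ → ℝ) : ℝ :=
  (1 / 2) * ∫ θ in (0:ℝ)..(2 * π), hL θ * bodyRho hK θ

/-- The integral `∫_{S¹} f dV_K` of `f` against the cone-volume measure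
`dV_K = (1/2) h_K dS_K = (1/2) h_K (h_K + h_K'') dθ`. -/
noncomputable def coneIntegral (h f : ℝ → ℝ) : ℝ :=
  (1 / 2) * ∫ θ in (0:ℝ)..(2 * π), f θ * (h θ * bodyRho h θ)

/-- Two bodies are dilates iff their support functions are positive multiples
of each other. -/
def AreDilates (hK hL : ℝ → ℝ) : Prop := ∃ c : ℝ, 0 < c ∧ ∀ θ : ℝ, hK θ = c * hL θ

/-- The cone-volume measure `V_K` of the body with support function `h`: the measure
on `S¹ = [0, 2π)` with density `(1/2) h_K/κ_K = (1/2) h_K (h_K + h_K'')` with respect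
to the angle measure. -/
noncomputable def coneVolumeMeasure (h : ℝ → ℝ) : Measure ℝ :=
  (volume.restrict (Set.Ico (0:ℝ) (2 * π))).withDensity
    (fun θ => ENNReal.ofReal ((1 / 2) * (h θ * bodyRho h θ)))

/-! Origin symmetry makes the support functions `π`-periodic, and every `π`-periodic `C²`
function satisfies `2 f(θ) = ∫_θ^{θ+π} sin(τ - θ) (f + f'')(τ) dτ`; in particular support
functions are positive. Equal cone-volume measures give `h_K ρ_K = h_L ρ_L`, where `ρ = h + h''`.
For `z = (h_K - h_L)/(h_K + h_L)` and `Q = ρ_K + ρ_L` this reads `ρ_K - ρ_L = -Q z`, so the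
representation formula applied to `h_K ∓ h_L` gives
`∫_θ^{θ+π} sin(τ - θ) Q(τ) (z(τ) + z(θ)) dτ = 0` for every `θ`.
If `M = z(θ₀)` is the maximum of `z`, this identity yields `z ≥ -M` everywhere; at `θ₀` the
integrand is then nonnegative with zero integral, so `z = -M` on `(θ₀, θ₀ + π)`, hence
`M = z(θ₀) = -M`. Thus `z = 0`, that is `h_K = h_L`. -/

open Function Set

theorem Function.Periodic.deriv {𝕜 F : Type*} [NontriviallyNormedField 𝕜] [NormedAddCommGroup F]
    [NormedSpace 𝕜 F] {f : 𝕜 → F} {c : 𝕜} (hf : Periodic f c) : Periodic (deriv f) c :=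
  fun x => by rw [← deriv_comp_add_const, funext hf]

section BodyRho

variable {f g : ℝ → ℝ}

theorem continuous_bodyRho (hf : ContDiff ℝ 2 f) : Continuous (bodyRho f) := by
  unfold bodyRho
  fun_prop

theorem bodyRho_add (hf : ContDiff ℝ 2 f) (hg : ContDiff ℝ 2 g) :
    bodyRho (f + g) = bodyRho f + bodyRho g := by
  have hd : deriv (f + g) = deriv f + deriv g :=
    funext fun θ => deriv_add (hf.differentiable two_ne_zero θ) (hg.differentiable two_ne_zero θ)
  funext θ
  simp only [bodyRho, hd, Pi.add_apply,
    deriv_add (hf.differentiable_deriv_two θ) (hg.differentiable_deriv_two θ)]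
  ring

theorem bodyRho_sub (hf : ContDiff ℝ 2 f) (hg : ContDiff ℝ 2 g) :
    bodyRho (f - g) = bodyRho f - bodyRho g := by
  have hd : deriv (f - g) = deriv f - deriv g :=
    funext fun θ => deriv_sub (hf.differentiable two_ne_zero θ) (hg.differentiable two_ne_zero θ)
  funext θ
  simp only [bodyRho, hd, Pi.sub_apply,
    deriv_sub (hf.differentiable_deriv_two θ) (hg.differentiable_deriv_two θ)]
  ring

/-- The antiderivative is `sin (τ - θ) f'(τ) - cos (τ - θ) f(τ)`. -/
theorem two_mul_eq_integral_sin_mul_bodyRho (hf : ContDiff ℝ 2 f) (hp : Periodic f π) (θ : ℝ) :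
    2 * f θ = ∫ τ in θ..θ + π, sin (τ - θ) * bodyRho f τ := by
  have hderiv : ∀ τ, HasDerivAt (fun τ => sin (τ - θ) * deriv f τ - cos (τ - θ) * f τ)
      (sin (τ - θ) * bodyRho f τ) τ := by
    intro τ
    have hs := ((hasDerivAt_id' τ).sub_const θ).sin
    have hc := ((hasDerivAt_id' τ).sub_const θ).cos
    refine ((hs.mul (hf.differentiable_deriv_two τ).hasDerivAt).sub
      (hc.mul (hf.differentiable two_ne_zero τ).hasDerivAt)).congr_deriv ?_
    simp only [bodyRho]
    ring
  have hcont : Continuous fun τ => sin (τ - θ) * bodyRho f τ :=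
    (continuous_sin.comp (continuous_sub_right θ)).mul (continuous_bodyRho hf)
  rw [integral_eq_sub_of_hasDerivAt (fun τ _ => hderiv τ) (hcont.intervalIntegrable _ _),
    add_sub_cancel_left, sub_self, hp θ]
  simp only [sin_pi, cos_pi, sin_zero, cos_zero]
  ring

end BodyRho

theorem integral_sin_mul_pos {Q : ℝ → ℝ} (hQ : Continuous Q) (hQpos : ∀ τ, 0 < Q τ) (θ : ℝ) :
    0 < ∫ τ in θ..θ + π, sin (τ - θ) * Q τ :=
  intervalIntegral_pos_of_pos_on
    ((by fun_prop : Continuous fun τ => sin (τ - θ) * Q τ).intervalIntegrable _ _)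
    (fun τ hτ => mul_pos (sin_pos_of_pos_of_lt_pi (by linarith [hτ.1]) (by linarith [hτ.2]))
      (hQpos τ))
    (by linarith [pi_pos])

theorem IsSmoothBody.pos_of_originSymmetric {h : ℝ → ℝ} (hb : IsSmoothBody h)
    (hs : OriginSymmetric h) (θ : ℝ) : 0 < h θ := by
  have hpos := integral_sin_mul_pos (continuous_bodyRho hb.1) hb.2.2 θ
  rw [← two_mul_eq_integral_sin_mul_bodyRho hb.1 hs θ] at hpos
  linarith

theorem eq_of_withDensity_ofReal_eq {f g : ℝ → ℝ} {c : ℝ} (hc : 0 < c)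
    (hf : Continuous f) (hg : Continuous g) (hf₀ : ∀ x, 0 ≤ f x) (hg₀ : ∀ x, 0 ≤ g x)
    (pf : Periodic f c) (pg : Periodic g c)
    (h : (volume.restrict (Ico 0 c)).withDensity (fun x => ENNReal.ofReal (f x)) =
      (volume.restrict (Ico 0 c)).withDensity (fun x => ENNReal.ofReal (g x))) :
    f = g := by
  have hae := (withDensity_eq_iff_of_sigmaFinite (by fun_prop) (by fun_prop)).mp h
  have hIco := Measure.eqOn_Ico_of_ae_eq volume hae
    (ENNReal.continuous_ofReal.comp hf).continuousOn
    (ENNReal.continuous_ofReal.comp hg).continuousOn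
  funext x
  obtain ⟨y, hy, hxy⟩ := (pf.sub pg).exists_mem_Ico₀ hc x
  have hfy : f y = g y := (ENNReal.ofReal_eq_ofReal_iff (hf₀ y) (hg₀ y)).mp (hIco hy)
  simpa only [Pi.sub_apply, hfy, sub_self, sub_eq_zero] using hxy

theorem mul_bodyRho_eq_of_coneVolumeMeasure_eq {hK hL : ℝ → ℝ} (bK : IsSmoothBody hK)
    (bL : IsSmoothBody hL) (pK : ∀ θ, 0 < hK θ) (pL : ∀ θ, 0 < hL θ)
    (hcone : coneVolumeMeasure hK = coneVolumeMeasure hL) (θ : ℝ) :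
    hK θ * bodyRho hK θ = hL θ * bodyRho hL θ := by
  have hdens := eq_of_withDensity_ofReal_eq (c := 2 * π)
    (f := fun θ => 1 / 2 * (hK θ * bodyRho hK θ)) (g := fun θ => 1 / 2 * (hL θ * bodyRho hL θ))
    (by positivity)
    (continuous_const.mul (bK.1.continuous.mul (continuous_bodyRho bK.1)))
    (continuous_const.mul (bL.1.continuous.mul (continuous_bodyRho bL.1)))
    (fun θ => by have := mul_pos (pK θ) (bK.2.2 θ); positivity)
    (fun θ => by have := mul_pos (pL θ) (bL.2.2 θ); positivity)
    (fun θ => by simp only [bK.2.1 θ, bK.2.1.deriv.deriv θ, bodyRho])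
    (fun θ => by simp only [bL.2.1 θ, bL.2.1.deriv.deriv θ, bodyRho]) hcone
  have := congrFun hdens θ
  linarith

section ExtremalArgument

variable {Q z : ℝ → ℝ}

theorem neg_le_of_integral_sin_mul_add_eq_zero (hQ : Continuous Q) (hQpos : ∀ τ, 0 < Q τ)
    (hz : Continuous z)
    (H : ∀ θ, ∫ τ in θ..θ + π, sin (τ - θ) * Q τ * (z τ + z θ) = 0)
    {M : ℝ} (hM : ∀ τ, z τ ≤ M) (θ : ℝ) : -M ≤ z θ := by
  have hsin : ∀ τ ∈ Icc θ (θ + π), 0 ≤ sin (τ - θ) := fun τ hτ =>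
    sin_nonneg_of_nonneg_of_le_pi (by linarith [hτ.1]) (by linarith [hτ.2])
  have hle : 0 ≤ (∫ τ in θ..θ + π, sin (τ - θ) * Q τ) * (M + z θ) := by
    rw [← H θ, ← intervalIntegral.integral_mul_const]
    refine intervalIntegral.integral_mono_on (by linarith [pi_pos])
      (Continuous.intervalIntegrable (by fun_prop) _ _)
      (Continuous.intervalIntegrable (by fun_prop) _ _) fun τ hτ => ?_
    have := mul_nonneg (hsin τ hτ) (hQpos τ).le
    gcongr
    exact hM τ
  linarith [nonneg_of_mul_nonneg_right hle (integral_sin_mul_pos hQ hQpos θ)]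

theorem eq_zero_of_integral_sin_mul_add_eq_zero (hQ : Continuous Q) (hQpos : ∀ τ, 0 < Q τ)
    (hz : Continuous z) (hp : Periodic z π)
    (H : ∀ θ, ∫ τ in θ..θ + π, sin (τ - θ) * Q τ * (z τ + z θ) = 0) : z = 0 := by
  obtain ⟨_, ⟨θ₀, rfl⟩, hmax⟩ :=
    (hp.compact_of_continuous pi_ne_zero hz).exists_isGreatest (range_nonempty z)
  have hM : ∀ τ, z τ ≤ z θ₀ := fun τ => hmax ⟨τ, rfl⟩
  have hlow := neg_le_of_integral_sin_mul_add_eq_zero hQ hQpos hz H hM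
  have hlt : θ₀ < θ₀ + π := by linarith [pi_pos]
  set F : ℝ → ℝ := fun τ => sin (τ - θ₀) * Q τ * (z τ + z θ₀)
  have hF : Continuous F := by fun_prop
  have hF₀ : ∀ τ ∈ Icc θ₀ (θ₀ + π), 0 ≤ F τ := fun τ hτ =>
    mul_nonneg (mul_nonneg (sin_nonneg_of_nonneg_of_le_pi (by linarith [hτ.1])
      (by linarith [hτ.2])) (hQpos τ).le) (by linarith [hlow τ])
  have hae : F =ᵐ[volume.restrict (Ioc θ₀ (θ₀ + π))] 0 :=
    (intervalIntegral.integral_eq_zero_iff_of_le_of_nonneg_ae hlt.le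
      ((ae_restrict_iff' measurableSet_Ioc).mpr
        (ae_of_all _ fun τ hτ => hF₀ τ (Ioc_subset_Icc_self hτ)))
      (hF.intervalIntegrable _ _)).mp (H θ₀)
  have hvanish := Measure.eqOn_Ioc_of_ae_eq volume hae hF.continuousOn continuousOn_const
  have hIoo : Ioo θ₀ (θ₀ + π) ⊆ {τ | z τ = -z θ₀} := fun τ hτ => by
    have hsin : 0 < sin (τ - θ₀) :=
      sin_pos_of_pos_of_lt_pi (by linarith [hτ.1]) (by linarith [hτ.2])
    have := hvanish (Ioo_subset_Ioc_self hτ)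
    simp only [F, Pi.zero_apply, mul_eq_zero, hsin.ne', (hQpos τ).ne', false_or] at this
    show z τ = -z θ₀
    linarith
  have hθ₀ : z θ₀ = -z θ₀ :=
    (isClosed_eq hz continuous_const).closure_subset_iff.mpr hIoo
      (closure_Ioo hlt.ne ▸ left_mem_Icc.mpr hlt.le)
  funext τ
  show z τ = 0
  linarith [hM τ, hlow τ]

end ExtremalArgument

section TwoBodies

variable {hK hL : ℝ → ℝ}

theorem integral_sin_mul_bodyRho_add_mul_ratio_add_eq_zero (cK : ContDiff ℝ 2 hK)
    (cL : ContDiff ℝ 2 hL) (sK : Periodic hK π) (sL : Periodic hL π)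
    (hw : ∀ θ, hK θ + hL θ ≠ 0) (hF : ∀ θ, hK θ * bodyRho hK θ = hL θ * bodyRho hL θ)
    (θ : ℝ) :
    ∫ τ in θ..θ + π, sin (τ - θ) * (bodyRho hK τ + bodyRho hL τ) *
      ((hK τ - hL τ) / (hK τ + hL τ) + (hK θ - hL θ) / (hK θ + hL θ)) = 0 := by
  have hv := two_mul_eq_integral_sin_mul_bodyRho (f := hK - hL) (cK.sub cL) (sK.sub sL) θ
  have hw' := two_mul_eq_integral_sin_mul_bodyRho (f := hK + hL) (cK.add cL) (sK.add sL) θ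
  simp only [bodyRho_sub cK cL, bodyRho_add cK cL, Pi.sub_apply, Pi.add_apply] at hv hw'
  have hratio : ∀ τ, (bodyRho hK τ + bodyRho hL τ) * ((hK τ - hL τ) / (hK τ + hL τ)) =
      -(bodyRho hK τ - bodyRho hL τ) := fun τ => by
    field_simp [hw τ]
    linear_combination 2 * hF τ
  have hρK := continuous_bodyRho cK
  have hρL := continuous_bodyRho cL
  have hsub : IntervalIntegrable (fun τ => -(sin (τ - θ) * (bodyRho hK τ - bodyRho hL τ)))
      volume θ (θ + π) := Continuous.intervalIntegrable (by fun_prop) _ _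
  have hadd : IntervalIntegrable (fun τ => sin (τ - θ) * (bodyRho hK τ + bodyRho hL τ))
      volume θ (θ + π) := Continuous.intervalIntegrable (by fun_prop) _ _
  set c := (hK θ - hL θ) / (hK θ + hL θ)
  calc ∫ τ in θ..θ + π, sin (τ - θ) * (bodyRho hK τ + bodyRho hL τ) *
        ((hK τ - hL τ) / (hK τ + hL τ) + c)
      = ∫ τ in θ..θ + π, (-(sin (τ - θ) * (bodyRho hK τ - bodyRho hL τ)) +
          c * (sin (τ - θ) * (bodyRho hK τ + bodyRho hL τ))) := by
        congr 1
        funext τ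
        linear_combination sin (τ - θ) * hratio τ
    _ = -(2 * (hK θ - hL θ)) + c * (2 * (hK θ + hL θ)) := by
        rw [integral_add hsub (hadd.const_mul c), intervalIntegral.integral_neg,
          intervalIntegral.integral_const_mul, hv, hw']
    _ = 0 := by
        simp only [c]
        field_simp [hw θ]
        ring

theorem eq_of_mul_bodyRho_eq (cK : ContDiff ℝ 2 hK) (cL : ContDiff ℝ 2 hL)
    (sK : Periodic hK π) (sL : Periodic hL π) (pK : ∀ θ, 0 < hK θ) (pL : ∀ θ, 0 < hL θ)
    (ρK : ∀ θ, 0 < bodyRho hK θ) (ρL : ∀ θ, 0 < bodyRho hL θ)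
    (hF : ∀ θ, hK θ * bodyRho hK θ = hL θ * bodyRho hL θ) : hK = hL := by
  have hw : ∀ θ, hK θ + hL θ ≠ 0 := fun θ => (add_pos (pK θ) (pL θ)).ne'
  have hz := eq_zero_of_integral_sin_mul_add_eq_zero
    ((continuous_bodyRho cK).add (continuous_bodyRho cL)) (fun τ => add_pos (ρK τ) (ρL τ))
    ((cK.continuous.sub cL.continuous).div (cK.continuous.add cL.continuous) hw)
    ((sK.sub sL).div (sK.add sL))
    (integral_sin_mul_bodyRho_add_mul_ratio_add_eq_zero cK cL sK sL hw hF)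
  funext θ
  have := congrFun hz θ
  simpa only [Pi.div_apply, Pi.sub_apply, Pi.add_apply, Pi.zero_apply, div_eq_zero_iff, hw θ,
    or_false, sub_eq_zero] using this

end TwoBodies

/-- **uniqueness of the planar log-Minkowski problem for smooth
symmetric bodies.** If two origin-symmetric planar convex bodies with `C²`
boundaries of positive curvature have the same cone-volume measure, they coincide. -/
theorem stmt5 (hK hL : ℝ → ℝ) (bK : IsSmoothBody hK) (bL : IsSmoothBody hL)
    (sK : OriginSymmetric hK) (sL : OriginSymmetric hL)
    (hcone : coneVolumeMeasure hK = coneVolumeMeasure hL) :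
    hK = hL := by
  have pK := bK.pos_of_originSymmetric sK
  have pL := bL.pos_of_originSymmetric sL
  exact eq_of_mul_bodyRho_eq bK.1 bL.1 sK sL pK pL bK.2.2 bL.2.2
    (mul_bodyRho_eq_of_coneVolumeMeasure_eq bK bL pK pL hcone)
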